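/- Wall equation for the twisted central charge on a K3 surface (Appendix B, equation (B.3)): assume K = 0 and χ = 2 (the K3 case). Fix a frame (H,γ,u) and Chern characters ch = (x, y₁H + y₂γ + δ, z), ch' = (r, c₁H + c₂γ + δ', χ') with xc₁ − ry₁ ≠ 0. Then for all real s and t > 0, the twisted wall condition Re Ẑ_{tH,sH+uγ}(ch')·Im Ẑ_{tH,sH+uγ}(ch) = Re Ẑ_{tH,sH+uγ}(ch)·Im Ẑ_{tH,sH+uγ}(ch') holds if and only if (s − C)² + t² = C² + D + 2/g, where C and D are the untwisted center and constant term C := (xχ' − rz + ud(xc₂ − ry₂))/(g(xc₁ − ry₁)) and D := (2zc₁ − 2c₂udy₁ − xu²dc₁ + 2y₂udc₁ − 2χ'y₁ + ru²dy₁)/(g(xc₁ − ry₁)). -/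

import Mathlib

noncomputable section

variable {V : Type*} [AddCommGroup V] [Module ℝ V]

/-- The Mukai pairing on `ℝ × V × ℝ`. -/
def mukaiPair (B : V →ₗ[ℝ] V →ₗ[ℝ] ℝ) (K : V) (w v : ℝ × V × ℝ) : ℝ :=
  B w.2.1 v.2.1 - w.1 * (v.2.2 - (1/2) * B v.2.1 K)
    - v.1 * (w.2.2 + (1/2) * B w.2.1 K) - (1/8) * w.1 * v.1 * B K K

/-- The Mukai vector of a Chern character. -/
def mukaiVec (B : V →ₗ[ℝ] V →ₗ[ℝ] ℝ) (K : V) (χ : ℝ) (ch : ℝ × V × ℝ) : ℝ × V × ℝ :=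
  (ch.1, ch.2.1 - ((1/4 : ℝ) * ch.1) • K,
    ch.2.2 - (1/4) * B ch.2.1 K + (1/2) * ch.1 * (χ - (1/16) * B K K))

/-- Real part of the central charge `Z_{ω,β}(ch)`. -/
def ZRe (B : V →ₗ[ℝ] V →ₗ[ℝ] ℝ) (ω β : V) (ch : ℝ × V × ℝ) : ℝ :=
  -ch.2.2 + B ch.2.1 β - (ch.1 / 2) * (B β β - B ω ω)

/-- Imaginary part of the central charge `Z_{ω,β}(ch)`. -/
def ZIm (B : V →ₗ[ℝ] V →ₗ[ℝ] ℝ) (ω β : V) (ch : ℝ × V × ℝ) : ℝ :=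
  B ch.2.1 ω - ch.1 * B β ω

/-- Real part of the vector `℧_{Z_{ω,β}}`. -/
def mhoRe (B : V →ₗ[ℝ] V →ₗ[ℝ] ℝ) (K : V) (χ : ℝ) (ω β : V) : ℝ × V × ℝ :=
  (1, β - (3/4 : ℝ) • K,
    -(1/2) * B ω ω + (1/2) * B (β - (3/4 : ℝ) • K) (β - (3/4 : ℝ) • K)
      - (1/2) * (χ - (1/8) * B K K))

/-- Imaginary part of the vector `℧_{Z_{ω,β}}`. -/
def mhoIm (B : V →ₗ[ℝ] V →ₗ[ℝ] ℝ) (K : V) (ω β : V) : ℝ × V × ℝ :=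
  (0, ω, B (β - (3/4 : ℝ) • K) ω)

/-- The Bayer–Macrì vector `w_{ω,β}(ch)`. -/
def wBM (B : V →ₗ[ℝ] V →ₗ[ℝ] ℝ) (K : V) (χ : ℝ) (ω β : V) (ch : ℝ × V × ℝ) :
    ℝ × V × ℝ :=
  ZIm B ω β ch • mhoRe B K χ ω β - ZRe B ω β ch • mhoIm B K ω β

/-!
On the frame, `B` is diagonal: `B(H,H) = g`, `B(γ,γ) = -d`, and `δ, δ'` pair to zero with `H` and
`γ`. So `Im Ẑ(ch) = t g (y₁ - x s)` is linear in `s`, and `Re Ẑ(ch)` is a quadratic in `s, t`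
whose `s²` and `t²` coefficients are `∓ x g / 2`. In the cross difference
`Re Ẑ(ch') Im Ẑ(ch) - Re Ẑ(ch) Im Ẑ(ch')` the cubic terms cancel and what remains is
`-(g² (x c₁ - r y₁) / 2) t` times `(s - C)² + t² - (C² + D + 2/g)`; the prefactor is nonzero for
`t > 0`.
-/

theorem mukaiVec_zero (B : V →ₗ[ℝ] V →ₗ[ℝ] ℝ) (χ a c : ℝ) (v : V) :
    mukaiVec B 0 χ (a, v, c) = (a, v, c + a * χ / 2) := by
  simp only [mukaiVec, smul_zero, sub_zero, map_zero, mul_zero, Prod.mk.injEq, true_and]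
  ring

section Frame

variable (B : V →ₗ[ℝ] V →ₗ[ℝ] ℝ) {H γ δ : V}

theorem ZIm_frame (hγH : B γ H = 0) (hδH : B δ H = 0) (a y₁ y₂ c s t u : ℝ) :
    ZIm B (t • H) (s • H + u • γ) (a, y₁ • H + y₂ • γ + δ, c) = t * B H H * (y₁ - a * s) := by
  simp only [ZIm, map_add, map_smul, LinearMap.add_apply, LinearMap.smul_apply, smul_eq_mul,
    hγH, hδH]
  ring

theorem ZRe_frame (hHγ : B H γ = 0) (hγH : B γ H = 0) (hδH : B δ H = 0) (hδγ : B δ γ = 0)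
    (a y₁ y₂ c s t u : ℝ) :
    ZRe B (t • H) (s • H + u • γ) (a, y₁ • H + y₂ • γ + δ, c) =
      -c + y₁ * s * B H H + y₂ * u * B γ γ
        - a / 2 * (s ^ 2 * B H H + u ^ 2 * B γ γ - t ^ 2 * B H H) := by
  simp only [ZRe, map_add, map_smul, LinearMap.add_apply, LinearMap.smul_apply, smul_eq_mul,
    hHγ, hγH, hδH, hδγ]
  ring

end Frame

theorem wall_iff_circle {g d u x y₁ y₂ z r c₁ c₂ χ' C D s t : ℝ} (hg : g ≠ 0)
    (hden : x * c₁ - r * y₁ ≠ 0) (ht : t ≠ 0)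
    (hC : C = (x * χ' - r * z + u * d * (x * c₂ - r * y₂)) / (g * (x * c₁ - r * y₁)))
    (hD : D = (2*z*c₁ - 2*c₂*u*d*y₁ - x*u^2*d*c₁ + 2*y₂*u*d*c₁ - 2*χ'*y₁ + r*u^2*d*y₁)
              / (g * (x * c₁ - r * y₁))) :
    (-(χ' + r) + c₁ * s * g + c₂ * u * -d - r / 2 * (s ^ 2 * g + u ^ 2 * -d - t ^ 2 * g)) *
        (t * g * (y₁ - x * s)) =
      (-(z + x) + y₁ * s * g + y₂ * u * -d - x / 2 * (s ^ 2 * g + u ^ 2 * -d - t ^ 2 * g)) *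
        (t * g * (c₁ - r * s)) ↔
      (s - C) ^ 2 + t ^ 2 = C ^ 2 + D + 2 / g := by
  have hgC : C * (g * (x * c₁ - r * y₁)) = x * χ' - r * z + u * d * (x * c₂ - r * y₂) := by
    rw [hC, div_mul_cancel₀ _ (mul_ne_zero hg hden)]
  have hgD : D * (g * (x * c₁ - r * y₁)) =
      2*z*c₁ - 2*c₂*u*d*y₁ - x*u^2*d*c₁ + 2*y₂*u*d*c₁ - 2*χ'*y₁ + r*u^2*d*y₁ := by
    rw [hD, div_mul_cancel₀ _ (mul_ne_zero hg hden)]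
  have hdet :
      (-(χ' + r) + c₁ * s * g + c₂ * u * -d - r / 2 * (s ^ 2 * g + u ^ 2 * -d - t ^ 2 * g)) *
          (t * g * (y₁ - x * s)) -
        (-(z + x) + y₁ * s * g + y₂ * u * -d - x / 2 * (s ^ 2 * g + u ^ 2 * -d - t ^ 2 * g)) *
          (t * g * (c₁ - r * s)) =
      -(g ^ 2 * (x * c₁ - r * y₁) * t / 2) * ((s - C) ^ 2 + t ^ 2 - (C ^ 2 + D + 2 / g)) := by
    linear_combination (-g * t * s) * hgC + (-g * t / 2) * hgD
      + (-g * (x * c₁ - r * y₁) * t / 2) * div_mul_cancel₀ 2 hg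
  have hfactor : -(g ^ 2 * (x * c₁ - r * y₁) * t / 2) ≠ 0 :=
    neg_ne_zero.2 (div_ne_zero (mul_ne_zero (mul_ne_zero (pow_ne_zero 2 hg) hden) ht) two_ne_zero)
  rw [← sub_eq_zero, hdet, mul_eq_zero_iff_left hfactor, sub_eq_zero]

theorem twisted_wall_K3_general
    (B : V →ₗ[ℝ] V →ₗ[ℝ] ℝ) (hB : ∀ v w : V, B v w = B w v)
    (H γ : V) (u g d : ℝ)
    (hg : g = B H H) (hgpos : 0 < g) (hHγ : B H γ = 0)
    (hd : d = -(B γ γ))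
    (x y₁ y₂ z r c₁ c₂ χ' : ℝ) (δ δ' : V)
    (hδH : B δ H = 0) (hδγ : B δ γ = 0) (hδ'H : B δ' H = 0) (hδ'γ : B δ' γ = 0)
    (hden : x * c₁ - r * y₁ ≠ 0)
    (C D : ℝ)
    (hC : C = (x * χ' - r * z + u * d * (x * c₂ - r * y₂)) / (g * (x * c₁ - r * y₁)))
    (hD : D = (2*z*c₁ - 2*c₂*u*d*y₁ - x*u^2*d*c₁ + 2*y₂*u*d*c₁ - 2*χ'*y₁ + r*u^2*d*y₁)
              / (g * (x * c₁ - r * y₁))) :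
    ∀ s t : ℝ, 0 < t →
      ((ZRe B (t • H) (s • H + u • γ)
            (mukaiVec B (0 : V) 2 (r, c₁ • H + c₂ • γ + δ', χ')) *
          ZIm B (t • H) (s • H + u • γ)
            (mukaiVec B (0 : V) 2 (x, y₁ • H + y₂ • γ + δ, z)) =
        ZRe B (t • H) (s • H + u • γ)
            (mukaiVec B (0 : V) 2 (x, y₁ • H + y₂ • γ + δ, z)) *
          ZIm B (t • H) (s • H + u • γ)
            (mukaiVec B (0 : V) 2 (r, c₁ • H + c₂ • γ + δ', χ'))) ↔
        (s - C)^2 + t^2 = C^2 + D + 2/g) := by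
  intro s t ht
  have hγH : B γ H = 0 := (hB γ H).trans hHγ
  have hγγ : B γ γ = -d := by rw [hd, neg_neg]
  simp only [mukaiVec_zero, ZRe_frame B hHγ hγH hδH hδγ, ZRe_frame B hHγ hγH hδ'H hδ'γ,
    ZIm_frame B hγH hδH, ZIm_frame B hγH hδ'H, ← hg, hγγ,
    mul_div_cancel_right₀ _ (two_ne_zero (α := ℝ))]
  exact wall_iff_circle hgpos.ne' hden ht.ne' hC hD

/-- wall equation for the twisted central charge on a K3 surface
(Appendix B, equation (B.3)); here `K = 0` and `χ = 2`, and the twisted central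
charge is the untwisted formula evaluated on the Mukai vector. -/
theorem twisted_wall_K3
    (B : V →ₗ[ℝ] V →ₗ[ℝ] ℝ) (hB : ∀ v w : V, B v w = B w v)
    (H γ : V) (u g d : ℝ)
    (hg : g = B H H) (hgpos : 0 < g) (hHγ : B H γ = 0)
    (hd : d = -(B γ γ)) (hdnn : 0 ≤ d) (hu : 0 ≤ u)
    (x y₁ y₂ z r c₁ c₂ χ' : ℝ) (δ δ' : V)
    (hδH : B δ H = 0) (hδγ : B δ γ = 0) (hδ'H : B δ' H = 0) (hδ'γ : B δ' γ = 0)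
    (hden : x * c₁ - r * y₁ ≠ 0)
    (C D : ℝ)
    (hC : C = (x * χ' - r * z + u * d * (x * c₂ - r * y₂)) / (g * (x * c₁ - r * y₁)))
    (hD : D = (2*z*c₁ - 2*c₂*u*d*y₁ - x*u^2*d*c₁ + 2*y₂*u*d*c₁ - 2*χ'*y₁ + r*u^2*d*y₁)
              / (g * (x * c₁ - r * y₁))) :
    ∀ s t : ℝ, 0 < t →
      ((ZRe B (t • H) (s • H + u • γ)
            (mukaiVec B (0 : V) 2 (r, c₁ • H + c₂ • γ + δ', χ')) *
          ZIm B (t • H) (s • H + u • γ)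
            (mukaiVec B (0 : V) 2 (x, y₁ • H + y₂ • γ + δ, z)) =
        ZRe B (t • H) (s • H + u • γ)
            (mukaiVec B (0 : V) 2 (x, y₁ • H + y₂ • γ + δ, z)) *
          ZIm B (t • H) (s • H + u • γ)
            (mukaiVec B (0 : V) 2 (r, c₁ • H + c₂ • γ + δ', χ'))) ↔
        (s - C)^2 + t^2 = C^2 + D + 2/g) :=
  twisted_wall_K3_general B hB H γ u g d hg hgpos hHγ hd x y₁ y₂ z r c₁ c₂ χ' δ δ' hδH hδγ hδ'H hδ'γ
    hden C D hC hD
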